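/- Let ι_X : A → X be a map in a pointed setting. Then secat(ι_X) ≤ n if and only if there exists a map ρ : X → T_n(ι_X) with t_n ∘ ρ ≃ Δ_{n+1}; and relcat(ι_X) ≤ n if and only if there exists such a ρ additionally satisfying ρ ∘ ι_X ≃ τ_n, where τ_n : A → T_n is the canonical map. -/

import Mathlib

open unitInterval

universe u

noncomputable section

/-- A continuous map is a homotopy equivalence. -/
def IsHEquiv {X Y : Type u} [TopologicalSpace X] [TopologicalSpace Y] (f : C(X, Y)) : Prop :=
  ∃ g : C(Y, X), (f.comp g).Homotopic (ContinuousMap.id Y) ∧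
    (g.comp f).Homotopic (ContinuousMap.id X)

section HPO

variable {Z A B P : Type u} [TopologicalSpace Z] [TopologicalSpace A] [TopologicalSpace B]
  [TopologicalSpace P]

/-- Gluing relation of the double mapping cylinder. -/
inductive HPORel (f : C(Z, A)) (g : C(Z, B)) :
    (A ⊕ ((Z × I) ⊕ B)) → (A ⊕ ((Z × I) ⊕ B)) → Prop
  | left (z : Z) : HPORel f g (Sum.inl (f z)) (Sum.inr (Sum.inl (z, 0)))
  | right (z : Z) : HPORel f g (Sum.inr (Sum.inl (z, 1))) (Sum.inr (Sum.inr (g z)))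

/-- The double mapping cylinder (standard homotopy pushout) of `f : Z → A` and `g : Z → B`. -/
def HPO (f : C(Z, A)) (g : C(Z, B)) : Type u := Quot (HPORel f g)

instance (f : C(Z, A)) (g : C(Z, B)) : TopologicalSpace (HPO f g) :=
  inferInstanceAs (TopologicalSpace (Quot _))

/-- Left structural map of the homotopy pushout. -/
def HPO.inl (f : C(Z, A)) (g : C(Z, B)) : C(A, HPO f g) :=
  ⟨fun a => Quot.mk _ (Sum.inl a), continuous_quot_mk.comp continuous_inl⟩

/-- Right structural map of the homotopy pushout. -/
def HPO.inr (f : C(Z, A)) (g : C(Z, B)) : C(B, HPO f g) :=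
  ⟨fun b => Quot.mk _ (Sum.inr (Sum.inr b)),
    continuous_quot_mk.comp (continuous_inr.comp continuous_inr)⟩

/-- Cylinder part of the homotopy pushout. -/
def HPO.cyl (f : C(Z, A)) (g : C(Z, B)) : C(Z × I, HPO f g) :=
  ⟨fun zt => Quot.mk _ (Sum.inr (Sum.inl zt)),
    continuous_quot_mk.comp (continuous_inr.comp continuous_inl)⟩

/-- The whisker map induced on the double mapping cylinder by a homotopy commutative square. -/
def HPO.desc (f : C(Z, A)) (g : C(Z, B)) (h : C(A, P)) (k : C(B, P))
    (H : ContinuousMap.Homotopy (h.comp f) (k.comp g)) : C(HPO f g, P) :=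
  ⟨Quot.lift (Sum.elim h (Sum.elim (fun zt => H (zt.2, zt.1)) k))
    (by
      rintro x y (⟨z⟩ | ⟨z⟩)
      · simp only [Sum.elim_inl, Sum.elim_inr]; exact (H.apply_zero z).symm
      · simp only [Sum.elim_inl, Sum.elim_inr]; exact H.apply_one z),
    continuous_quot_lift _ (by
      apply Continuous.sumElim h.continuous
      apply Continuous.sumElim _ k.continuous
      exact H.continuous.comp continuous_swap)⟩

/-- The square with legs `f, g` and cone maps `h, k` is a homotopy pushout. -/
def IsHPO (f : C(Z, A)) (g : C(Z, B)) (h : C(A, P)) (k : C(B, P)) : Prop :=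
  ∃ H : ContinuousMap.Homotopy (h.comp f) (k.comp g), IsHEquiv (HPO.desc f g h k H)

end HPO

section HPB

variable {A B X P : Type u} [TopologicalSpace A] [TopologicalSpace B] [TopologicalSpace X]
  [TopologicalSpace P]

/-- The standard homotopy pullback of `f : A → X` and `g : B → X`. -/
def HPB (f : C(A, X)) (g : C(B, X)) : Type u :=
  { p : A × C(I, X) × B // p.2.1 0 = f p.1 ∧ p.2.1 1 = g p.2.2 }

instance (f : C(A, X)) (g : C(B, X)) : TopologicalSpace (HPB f g) :=
  inferInstanceAs (TopologicalSpace (Subtype _))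

/-- First projection of the homotopy pullback. -/
def HPB.fst (f : C(A, X)) (g : C(B, X)) : C(HPB f g, A) :=
  ⟨fun p => p.1.1, continuous_fst.comp continuous_subtype_val⟩

/-- Second projection of the homotopy pullback. -/
def HPB.snd (f : C(A, X)) (g : C(B, X)) : C(HPB f g, B) :=
  ⟨fun p => p.1.2.2, continuous_snd.comp (continuous_snd.comp continuous_subtype_val)⟩

/-- The tautological homotopy over the homotopy pullback. -/
def HPB.pathHomotopy (f : C(A, X)) (g : C(B, X)) :
    ContinuousMap.Homotopy (g.comp (HPB.snd f g)) (f.comp (HPB.fst f g)) where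
  toFun := fun q => q.2.1.2.1 (σ q.1)
  continuous_toFun := by
    have h1 : Continuous fun q : I × HPB f g => (q.2.1.2.1, σ q.1) := by
      refine Continuous.prodMk ?_ (continuous_symm.comp continuous_fst)
      exact (continuous_fst.comp (continuous_snd.comp continuous_subtype_val)).comp continuous_snd
    exact ContinuousEval.continuous_eval.comp h1
  map_zero_left := fun p => by simp [HPB.snd, p.2.2]
  map_one_left := fun p => by simp [HPB.fst, p.2.1]

/-- The comparison (whisker) map into the homotopy pullback. -/
def HPB.lift (f : C(A, X)) (g : C(B, X)) (p : C(P, A)) (q : C(P, B))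
    (H : ContinuousMap.Homotopy (f.comp p) (g.comp q)) : C(P, HPB f g) :=
  ⟨fun y => ⟨(p y, ((H.toContinuousMap.comp ⟨Prod.swap, continuous_swap⟩).curry y, q y)),
      by simp⟩,
    by
      apply Continuous.subtype_mk
      exact p.continuous.prodMk
        (((H.toContinuousMap.comp ⟨Prod.swap, continuous_swap⟩).curry).continuous.prodMk
          q.continuous)⟩

/-- The square with cospan `f, g` and cone maps `p, q` is a homotopy pullback. -/
def IsHPB (f : C(A, X)) (g : C(B, X)) (p : C(P, A)) (q : C(P, B)) : Prop :=
  ∃ H : ContinuousMap.Homotopy (f.comp p) (g.comp q), IsHEquiv (HPB.lift f g p q H)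

end HPB

/-- One step of the Ganea construction: a space over `X` under `A`. -/
structure GaneaStep (A X : Type u) [TopologicalSpace A] [TopologicalSpace X] where
  G : Type u
  inst : TopologicalSpace G
  g : @ContinuousMap G X inst _
  α : @ContinuousMap A G _ inst

attribute [instance] GaneaStep.inst

/-- The Ganea construction of a map `ι : A → X`. -/
def ganea {A X : Type u} [TopologicalSpace A] [TopologicalSpace X] (ι : C(A, X)) :
    ℕ → GaneaStep A X
  | 0 => { G := A, inst := inferInstance, g := ι, α := ContinuousMap.id A }
  | n + 1 =>
    let s := ganea ι n
    { G := HPO (HPB.snd s.g ι) (HPB.fst s.g ι)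
      inst := inferInstance
      g := HPO.desc (HPB.snd s.g ι) (HPB.fst s.g ι) ι s.g (HPB.pathHomotopy s.g ι)
      α := HPO.inl (HPB.snd s.g ι) (HPB.fst s.g ι) }

/-- Least natural number (as `ℕ∞`) satisfying a predicate. -/
def theNat (P : ℕ → Prop) : ℕ∞ := sInf ((Nat.cast : ℕ → ℕ∞) '' { n | P n })

/-- `secat ι ≤ n` : the `n`-th Ganea map admits a homotopy section. -/
def secatLe {A X : Type u} [TopologicalSpace A] [TopologicalSpace X] (ι : C(A, X)) (n : ℕ) :
    Prop :=
  ∃ s : C(X, (ganea ι n).G), ((ganea ι n).g.comp s).Homotopic (ContinuousMap.id X)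

/-- `relcat ι ≤ n` : the `n`-th Ganea map admits a homotopy section compatible with `α_n`. -/
def relcatLe {A X : Type u} [TopologicalSpace A] [TopologicalSpace X] (ι : C(A, X)) (n : ℕ) :
    Prop :=
  ∃ s : C(X, (ganea ι n).G), ((ganea ι n).g.comp s).Homotopic (ContinuousMap.id X) ∧
    (s.comp ι).Homotopic (ganea ι n).α

/-- Sectional category (James), Ganea style. -/
def secat {A X : Type u} [TopologicalSpace A] [TopologicalSpace X] (ι : C(A, X)) : ℕ∞ :=
  theNat (secatLe ι)

/-- Relative category of a map. -/
def relcat {A X : Type u} [TopologicalSpace A] [TopologicalSpace X] (ι : C(A, X)) : ℕ∞ :=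
  theNat (relcatLe ι)

/-- `PushcatLe A X tX ι n` : `ι` is obtained from a homotopy equivalence by at most `n`
successive homotopy pushouts along maps to `A`. -/
inductive PushcatLe (A : Type u) [tA : TopologicalSpace A] :
    ∀ (X : Type u) (tX : TopologicalSpace X), @ContinuousMap A X tA tX → ℕ → Prop
  | equiv {X : Type u} [tX : TopologicalSpace X] (ι : C(A, X)) :
      IsHEquiv ι → PushcatLe A X tX ι 0
  | step {X X' Z : Type u} [tX : TopologicalSpace X] [tX' : TopologicalSpace X']
      [tZ : TopologicalSpace Z] {ι : C(A, X)} {n : ℕ} (h : PushcatLe A X tX ι n)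
      (ρ : C(Z, A)) (τ : C(Z, X)) (ι' : C(A, X')) (χ : C(X, X'))
      (hpo : IsHPO ρ τ ι' χ) (hχ : (χ.comp ι).Homotopic ι') :
      PushcatLe A X' tX' ι' (n + 1)
  | homotopic {X : Type u} [tX : TopologicalSpace X] {ι ι' : C(A, X)} {n : ℕ}
      (h : PushcatLe A X tX ι n) (hh : ι.Homotopic ι') : PushcatLe A X tX ι' n

/-- `RelcatLe` : as `PushcatLe`, with a compatible section at each step. -/
inductive RelcatLe (A : Type u) [tA : TopologicalSpace A] :
    ∀ (X : Type u) (tX : TopologicalSpace X), @ContinuousMap A X tA tX → ℕ → Prop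
  | equiv {X : Type u} [tX : TopologicalSpace X] (ι : C(A, X)) :
      IsHEquiv ι → RelcatLe A X tX ι 0
  | step {X X' Z : Type u} [tX : TopologicalSpace X] [tX' : TopologicalSpace X']
      [tZ : TopologicalSpace Z] {ι : C(A, X)} {n : ℕ} (h : RelcatLe A X tX ι n)
      (ρ : C(Z, A)) (τ : C(Z, X)) (ι' : C(A, X')) (χ : C(X, X'))
      (hpo : IsHPO ρ τ ι' χ) (hχ : (χ.comp ι).Homotopic ι')
      (σ₀ : C(A, Z)) (hσ : (ρ.comp σ₀).Homotopic (ContinuousMap.id A))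
      (hτσ : (τ.comp σ₀).Homotopic ι) :
      RelcatLe A X' tX' ι' (n + 1)
  | homotopic {X : Type u} [tX : TopologicalSpace X] {ι ι' : C(A, X)} {n : ℕ}
      (h : RelcatLe A X tX ι n) (hh : ι.Homotopic ι') : RelcatLe A X tX ι' n

/-- Strong pushout category of a map. -/
def Pushcat {A X : Type u} [tA : TopologicalSpace A] [tX : TopologicalSpace X]
    (ι : C(A, X)) : ℕ∞ :=
  theNat (fun n => PushcatLe A X tX ι n)

/-- Strong relative category of a map. -/
def Relcat {A X : Type u} [tA : TopologicalSpace A] [tX : TopologicalSpace X]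
    (ι : C(A, X)) : ℕ∞ :=
  theNat (fun n => RelcatLe A X tX ι n)

/-- Lusternik–Schnirelmann category (Ganea-normalized) of a pointed space. -/
def catP (X : Type u) [TopologicalSpace X] (x₀ : X) : ℕ∞ :=
  secat (ContinuousMap.const PUnit.{u + 1} x₀)

/-- Strong (Fox) category of a pointed space. -/
def CatP (X : Type u) [TopologicalSpace X] (x₀ : X) : ℕ∞ :=
  Relcat (ContinuousMap.const PUnit.{u + 1} x₀)

/-- `g : A → X` is the homotopy cofibre of `f : Y → A` (with cone point `x₀`). -/
def IsHCofiberPt {Y A X : Type u} [TopologicalSpace Y] [TopologicalSpace A] [TopologicalSpace X]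
    (f : C(Y, A)) (g : C(A, X)) (x₀ : X) : Prop :=
  IsHPO f (ContinuousMap.const Y (PUnit.unit : PUnit.{u + 1})) g
    (ContinuousMap.const PUnit.{u + 1} x₀)

/-- The diagonal map. -/
def diagMap (X : Type u) [TopologicalSpace X] : C(X, X × X) :=
  ⟨fun x => (x, x), continuous_id.prodMk continuous_id⟩

/-- Topological complexity (Farber, normalized). -/
def compl (X : Type u) [TopologicalSpace X] : ℕ∞ := secat (diagMap X)

/-- Strong complexity: strong relative category of the diagonal. -/
def Compl' (X : Type u) [TopologicalSpace X] : ℕ∞ := Relcat (diagMap X)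

end

noncomputable section

lemma continuous_snocFun {X Y : Type u} [TopologicalSpace X] [TopologicalSpace Y] {n : ℕ}
    {f : Y → Fin n → X} {g : Y → X} (hf : Continuous f) (hg : Continuous g) :
    Continuous fun y => (Fin.snoc (f y) (g y) : Fin (n + 1) → X) := by
  apply continuous_pi
  intro j
  induction j using Fin.lastCases with
  | last => simpa only [Fin.snoc_last] using hg
  | cast j => simp only [Fin.snoc_castSucc]; exact (continuous_apply j).comp hf

/-- One stage of the Whitehead (fat wedge) construction of a map `ι : A → X`. -/
structure WhStep (A X : Type u) [TopologicalSpace A] [TopologicalSpace X] (i : ℕ) where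
  T : Type u
  inst : TopologicalSpace T
  t : @ContinuousMap T (Fin (i + 1) → X) inst _
  υ : @ContinuousMap ((Fin i → X) × A) T _ inst

attribute [instance] WhStep.inst

/-- The Whitehead construction (fat wedges) of a map `ι : A → X`. -/
def whitehead {A X : Type u} [TopologicalSpace A] [TopologicalSpace X] (ιX : C(A, X)) :
    (i : ℕ) → WhStep A X i
  | 0 =>
    { T := A
      inst := inferInstance
      t := ⟨fun a _ => ιX a, continuous_pi fun _ => map_continuous ιX⟩
      υ := ⟨Prod.snd, continuous_snd⟩ }
  | i + 1 =>
    let s := whitehead ιX i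
    let utop : C(s.T × A, (Fin (i + 1) → X) × A) :=
      ⟨fun p => (s.t p.1, p.2), ((map_continuous s.t).comp continuous_fst).prodMk
        continuous_snd⟩
    let uleft : C(s.T × A, s.T × X) :=
      ⟨fun p => (p.1, ιX p.2), continuous_fst.prodMk ((map_continuous ιX).comp continuous_snd)⟩
    let h : C((Fin (i + 1) → X) × A, Fin (i + 2) → X) :=
      ⟨fun p => Fin.snoc p.1 (ιX p.2),
        continuous_snocFun continuous_fst ((map_continuous ιX).comp continuous_snd)⟩
    let k : C(s.T × X, Fin (i + 2) → X) :=
      ⟨fun p => Fin.snoc (s.t p.1) p.2,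
        continuous_snocFun ((map_continuous s.t).comp continuous_fst) continuous_snd⟩
    { T := HPO utop uleft
      inst := inferInstance
      t := HPO.desc utop uleft h k
        ((ContinuousMap.Homotopy.refl (h.comp utop)).cast rfl (by ext p; rfl))
      υ := HPO.inl utop uleft }

/-- The `n`-fold diagonal `X → Xⁿ`. -/
def diagPi (X : Type u) [TopologicalSpace X] (n : ℕ) : C(X, Fin n → X) :=
  ⟨fun x _ => x, continuous_pi fun _ => continuous_id⟩

/-- The whisker map `δ_n : A → Xⁿ × A` of `Δ_n ∘ ι` and `id`. -/
def deltaW {A X : Type u} [TopologicalSpace A] [TopologicalSpace X] (ιX : C(A, X)) (n : ℕ) :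
    C(A, (Fin n → X) × A) :=
  ⟨fun a => (fun _ => ιX a, a),
    (continuous_pi fun _ => map_continuous ιX).prodMk continuous_id⟩

end

/-
Ganea spaces `G_n` and fat wedges `T_n` are both iterated homotopy pushouts, and are compared level
by level. By induction there are maps `φ_n : G_n → T_n` with `t_n ∘ φ_n ≃ Δ ∘ g_n` and
`φ_n ∘ α_n = υ_n ∘ δ_n`, and maps `ψ_n` from the homotopy pullback of `Δ` and `t_n` to `G_n` with
`g_n ∘ ψ_n ≃ pr_X` that send every point lying over `υ_n (δ_n a)` to `α_n a`. Both inductive steps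
are explicit formulas on double mapping cylinders; to build `ψ_{n+1}`, the fat wedge `T_{n+1}` is
cut along its cylinder coordinate into a part with an `A`-coordinate, a part with a
`T_n`-coordinate, and a middle part with both. A homotopy section `s` of `g_n` gives
`ρ = φ_n ∘ s`, and a `ρ` with `t_n ∘ ρ ≃ Δ` gives the homotopy section `ψ_n ∘ (id, ρ)`. Since
`G_n → G_{n+1}` carries sections of `g_n` to sections of `g_{n+1}`, `secat ≤ n` amounts to a
section at level `n`; likewise for `relcat`.
-/

noncomputable section

open ContinuousMap

theorem theNat_le_coe_iff (P : ℕ → Prop) (n : ℕ) : theNat P ≤ n ↔ ∃ m ≤ n, P m := by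
  constructor
  · intro h
    have hne : ((Nat.cast : ℕ → ℕ∞) '' {m | P m}).Nonempty := by
      by_contra he
      rw [Set.not_nonempty_iff_eq_empty] at he
      simp [theNat, he] at h
    obtain ⟨m, hm, hmin⟩ := csInf_mem hne
    exact ⟨m, by rw [theNat, ← hmin] at h; exact_mod_cast h, hm⟩
  · rintro ⟨m, hmn, hm⟩
    exact (sInf_le (Set.mem_image_of_mem _ hm)).trans (by exact_mod_cast hmn)

section Reparametrization

def projI (r : ℝ) : I := Set.projIcc 0 1 zero_le_one r

@[fun_prop] theorem continuous_projI : Continuous projI := continuous_projIcc (h := zero_le_one)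

@[simp] theorem projI_coe (t : I) : projI t = t := Set.projIcc_val zero_le_one t

@[simp] theorem projI_zero : projI 0 = 0 := projI_coe 0

@[simp] theorem projI_one : projI 1 = 1 := projI_coe 1

theorem projI_of_nonpos {r : ℝ} (h : r ≤ 0) : projI r = 0 := Set.projIcc_of_le_left _ h

theorem projI_of_one_le {r : ℝ} (h : 1 ≤ r) : projI r = 1 := Set.projIcc_of_right_le _ h

theorem coe_projI {r : ℝ} (h₀ : 0 ≤ r) (h₁ : r ≤ 1) : (projI r : ℝ) = r := by
  simp [projI, Set.projIcc_of_mem _ ⟨h₀, h₁⟩]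

theorem ne_one_of_coe_le {t : I} {c : ℝ} (h : (t : ℝ) ≤ c) (hc : c < 1) : t ≠ 1 := by
  rintro rfl
  simp only [Set.Icc.coe_one] at h
  linarith

theorem ne_zero_of_le_coe {t : I} {c : ℝ} (h : c ≤ t) (hc : 0 < c) : t ≠ 0 := by
  rintro rfl
  simp only [Set.Icc.coe_zero] at h
  linarith

end Reparametrization

section Pasting

variable {P W : Type*} [TopologicalSpace P] [TopologicalSpace W] {μ : P → ℝ} {a b : ℝ}
  {f₁ : C({p | μ p ≤ a}, W)} {f₂ : C({p | a ≤ μ p ∧ μ p ≤ b}, W)} {f₃ : C({p | b ≤ μ p}, W)}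

variable (μ f₁ f₂ f₃) in
def pasteThreeFun (p : P) : W :=
  if h₁ : μ p ≤ a then f₁ ⟨p, h₁⟩
  else if h₂ : μ p ≤ b then f₂ ⟨p, (not_le.1 h₁).le, h₂⟩
  else f₃ ⟨p, (not_le.1 h₂).le⟩

theorem pasteThreeFun_of_mem_mid (hab : a ≤ b)
    (h₁₂ : ∀ p (h : μ p = a), f₁ ⟨p, h.le⟩ = f₂ ⟨p, h.ge, h ▸ hab⟩) {p : P}
    (hp : a ≤ μ p ∧ μ p ≤ b) : pasteThreeFun μ f₁ f₂ f₃ p = f₂ ⟨p, hp⟩ := by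
  unfold pasteThreeFun
  by_cases h₁ : μ p ≤ a
  · rw [dif_pos h₁]
    exact h₁₂ p (le_antisymm h₁ hp.1)
  · rw [dif_neg h₁, dif_pos hp.2]

theorem pasteThreeFun_of_ge (hab : a ≤ b)
    (h₁₂ : ∀ p (h : μ p = a), f₁ ⟨p, h.le⟩ = f₂ ⟨p, h.ge, h ▸ hab⟩)
    (h₂₃ : ∀ p (h : μ p = b), f₂ ⟨p, h ▸ hab, h.le⟩ = f₃ ⟨p, h.ge⟩) {p : P} (hp : b ≤ μ p) :
    pasteThreeFun μ f₁ f₂ f₃ p = f₃ ⟨p, hp⟩ := by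
  by_cases h₂ : μ p ≤ b
  · have hb : μ p = b := le_antisymm h₂ hp
    rw [pasteThreeFun_of_mem_mid hab h₁₂ ⟨hb ▸ hab, h₂⟩]
    exact h₂₃ p hb
  · unfold pasteThreeFun
    rw [dif_neg (fun h₁ => h₂ (h₁.trans hab)), dif_neg h₂]

variable (hμ : Continuous μ) (hab : a ≤ b)
  (h₁₂ : ∀ p (h : μ p = a), f₁ ⟨p, h.le⟩ = f₂ ⟨p, h.ge, h ▸ hab⟩)
  (h₂₃ : ∀ p (h : μ p = b), f₂ ⟨p, h ▸ hab, h.le⟩ = f₃ ⟨p, h.ge⟩)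

def ContinuousMap.pasteThree : C(P, W) where
  toFun := pasteThreeFun μ f₁ f₂ f₃
  continuous_toFun := by
    have hcover : ({p | μ p ≤ a} ∪ {p | a ≤ μ p ∧ μ p ≤ b}) ∪ {p | b ≤ μ p} = Set.univ :=
      Set.eq_univ_of_forall fun p => by
        rcases le_total (μ p) a with h₁ | h₁
        · exact .inl (.inl h₁)
        rcases le_total (μ p) b with h₂ | h₂
        · exact .inl (.inr ⟨h₁, h₂⟩)
        · exact .inr h₂
    have hcl₁ : IsClosed {p | μ p ≤ a} := isClosed_le hμ continuous_const
    have hcl₂ : IsClosed {p | a ≤ μ p ∧ μ p ≤ b} :=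
      (isClosed_le continuous_const hμ).inter (isClosed_le hμ continuous_const)
    have hcl₃ : IsClosed {p | b ≤ μ p} := isClosed_le continuous_const hμ
    have piece : ∀ {s : Set P} (F : C(s, W)),
        (∀ p (hp : p ∈ s), pasteThreeFun μ f₁ f₂ f₃ p = F ⟨p, hp⟩) →
        ContinuousOn (pasteThreeFun μ f₁ f₂ f₃) s := fun F hF => by
      rw [continuousOn_iff_continuous_domRestrict]
      convert F.continuous using 1
      exact funext fun p => hF p p.2
    rw [← continuousOn_univ, ← hcover]
    exact ((piece f₁ fun p hp => dif_pos hp).union_of_isClosed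
      (piece f₂ fun p hp => pasteThreeFun_of_mem_mid hab h₁₂ hp) hcl₁ hcl₂).union_of_isClosed
      (piece f₃ fun p hp => pasteThreeFun_of_ge hab h₁₂ h₂₃ hp) (hcl₁.union hcl₂) hcl₃

theorem ContinuousMap.pasteThree_of_le {p : P} (hp : μ p ≤ a) :
    pasteThree hμ hab h₁₂ h₂₃ p = f₁ ⟨p, hp⟩ := dif_pos hp

theorem ContinuousMap.pasteThree_of_mem {p : P} (hp : a ≤ μ p ∧ μ p ≤ b) :
    pasteThree hμ hab h₁₂ h₂₃ p = f₂ ⟨p, hp⟩ := pasteThreeFun_of_mem_mid hab h₁₂ hp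

theorem ContinuousMap.pasteThree_of_ge {p : P} (hp : b ≤ μ p) :
    pasteThree hμ hab h₁₂ h₂₃ p = f₃ ⟨p, hp⟩ := pasteThreeFun_of_ge hab h₁₂ h₂₃ hp

end Pasting

theorem Quot.continuous_get_lift {α W : Type*} [TopologicalSpace α] [TopologicalSpace W]
    {r : α → α → Prop} (V : α → Option W) (hV : ∀ x y, r x y → V x = V y)
    (hV_open : ∀ O, IsOpen O → IsOpen (V ⁻¹' (some '' O))) :
    Continuous fun q : {q : Quot r // (Quot.lift V hV q).isSome} =>
      (Quot.lift V hV q.1).get q.2 := by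
  rw [continuous_def]
  intro O hO
  have hpre : (fun q : {q : Quot r // (Quot.lift V hV q).isSome} =>
      (Quot.lift V hV q.1).get q.2) ⁻¹' O = Subtype.val ⁻¹' (Quot.lift V hV ⁻¹' (some '' O)) := by
    ext ⟨q, hq⟩
    simp only [Set.mem_preimage, Set.mem_image]
    constructor
    · exact fun h => ⟨_, h, Option.some_get hq⟩
    · rintro ⟨w, hw, hqw⟩
      simpa [← hqw] using hw
  rw [hpre]
  exact ((isQuotientMap_quot_mk (r := r)).isOpen_preimage
    (s := Quot.lift V hV ⁻¹' (some '' O))).1 (hV_open O hO) |>.preimage continuous_subtype_val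

namespace HPO

variable {Z A B W : Type u} [TopologicalSpace Z] [TopologicalSpace A] [TopologicalSpace B]
  [TopologicalSpace W] (f : C(Z, A)) (g : C(Z, B))

def pi : C(HPO f g, I) :=
  ⟨Quot.lift (Sum.elim (fun _ => 0) (Sum.elim Prod.snd (fun _ => 1)))
    (by rintro _ _ (_ | _) <;> rfl),
    continuous_quot_lift _ (continuous_const.sumElim (continuous_snd.sumElim continuous_const))⟩

@[simp] theorem pi_inl (a : A) : pi f g (inl f g a) = 0 := rfl
@[simp] theorem pi_cyl (zt : Z × I) : pi f g (cyl f g zt) = zt.2 := rfl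
@[simp] theorem pi_inr (b : B) : pi f g (inr f g b) = 1 := rfl

theorem inl_eq_cyl (z : Z) : inl f g (f z) = cyl f g (z, 0) := Quot.sound (HPORel.left z)

theorem cyl_eq_inr (z : Z) : cyl f g (z, 1) = inr f g (g z) := Quot.sound (HPORel.right z)

@[elab_as_elim]
theorem ind {f : C(Z, A)} {g : C(Z, B)} {motive : HPO f g → Prop}
    (inl : ∀ a, motive (inl f g a)) (cyl : ∀ zt, motive (cyl f g zt))
    (inr : ∀ b, motive (inr f g b)) (x : HPO f g) : motive x := by
  induction x using Quot.ind with
  | mk u => rcases u with a | zt | b; exacts [inl a, cyl zt, inr b]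

@[simp] theorem lift_inl {β : Sort*} (F : A ⊕ ((Z × I) ⊕ B) → β) (hF) (a : A) :
    Quot.lift F hF (inl f g a) = F (.inl a) := rfl
@[simp] theorem lift_cyl {β : Sort*} (F : A ⊕ ((Z × I) ⊕ B) → β) (hF) (zt : Z × I) :
    Quot.lift F hF (cyl f g zt) = F (.inr (.inl zt)) := rfl
@[simp] theorem lift_inr {β : Sort*} (F : A ⊕ ((Z × I) ⊕ B) → β) (hF) (b : B) :
    Quot.lift F hF (inr f g b) = F (.inr (.inr b)) := rfl

def cylHomotopy : Homotopy ((inl f g).comp f) ((inr f g).comp g) where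
  toFun tz := cyl f g (tz.2, tz.1)
  continuous_toFun := (cyl f g).continuous.comp continuous_swap
  map_zero_left z := (inl_eq_cyl f g z).symm
  map_one_left z := cyl_eq_inr f g z

def glueHomotopy {F G : C(HPO f g, W)}
    (HA : Homotopy (F.comp (inl f g)) (G.comp (inl f g)))
    (HB : Homotopy (F.comp (inr f g)) (G.comp (inr f g)))
    (Θ : C((Z × I) × I, W))
    (hΘ₀ : ∀ zt, Θ (zt, 0) = F (cyl f g zt)) (hΘ₁ : ∀ zt, Θ (zt, 1) = G (cyl f g zt))
    (hΘA : ∀ z v, Θ ((z, 0), v) = HA (v, f z)) (hΘB : ∀ z v, Θ ((z, 1), v) = HB (v, g z)) :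
    Homotopy F G :=
  -- a map into the path space, so that it descends to the quotient `HPO f g`
  let Λ : C(HPO f g, C(I, W)) :=
    ⟨Quot.lift (Sum.elim (HA.toContinuousMap.comp ⟨Prod.swap, continuous_swap⟩).curry
      (Sum.elim Θ.curry (HB.toContinuousMap.comp ⟨Prod.swap, continuous_swap⟩).curry))
      (by rintro _ _ (⟨z⟩ | ⟨z⟩) <;> ext v; exacts [(hΘA z v).symm, hΘB z v]),
    continuous_quot_lift _ ((map_continuous _).sumElim
      ((map_continuous _).sumElim (map_continuous _)))⟩
  { toFun := fun p => Λ p.2 p.1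
    continuous_toFun := ContinuousEval.continuous_eval.comp
      ((Λ.continuous.comp continuous_snd).prodMk continuous_fst)
    map_zero_left := ind (fun a => HA.apply_zero a) hΘ₀ (fun b => HB.apply_zero b)
    map_one_left := ind (fun a => HA.apply_one a) hΘ₁ (fun b => HB.apply_one b) }

/-- Where `pi ≠ 1`, a point has a coordinate in `A`; this records its image under `h` on
representatives, with `none` exactly over `pi = 1` so that it respects the gluing. -/
def leftValue (h : C(A, W)) : A ⊕ ((Z × I) ⊕ B) → Option W :=
  Sum.elim (fun a => some (h a))
    (Sum.elim (fun zt => if zt.2 = 1 then none else some (h (f zt.1))) fun _ => none)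

def rightValue (k : C(B, W)) : A ⊕ ((Z × I) ⊕ B) → Option W :=
  Sum.elim (fun _ => none)
    (Sum.elim (fun zt => if zt.2 = 0 then none else some (k (g zt.1))) fun b => some (k b))

theorem leftValue_compat (h : C(A, W)) :
    ∀ x y, HPORel f g x y → leftValue f h x = leftValue f h y := by
  rintro _ _ (_ | _) <;> simp [leftValue]

theorem rightValue_compat (k : C(B, W)) :
    ∀ x y, HPORel f g x y → rightValue g k x = rightValue g k y := by
  rintro _ _ (_ | _) <;> simp [rightValue]

theorem isOpen_leftValue_preimage (h : C(A, W)) {O : Set W} (hO : IsOpen O) :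
    IsOpen ((leftValue f h : A ⊕ ((Z × I) ⊕ B) → Option W) ⁻¹' (some '' O)) := by
  rw [isOpen_sum_iff, isOpen_sum_iff]
  refine ⟨?_, ?_, ?_⟩
  · convert h.continuous.isOpen_preimage O hO using 1
    ext a
    simp [leftValue]
  · convert ((h.continuous.comp (f.continuous.comp continuous_fst)).isOpen_preimage O hO).inter
      (isOpen_ne_fun continuous_snd continuous_const : IsOpen {zt : Z × I | zt.2 ≠ 1}) using 1
    ext ⟨z, t⟩
    by_cases ht : t = 1 <;> simp [leftValue, ht]
  · convert isOpen_empty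
    ext b
    simp [leftValue]

theorem isOpen_rightValue_preimage (k : C(B, W)) {O : Set W} (hO : IsOpen O) :
    IsOpen ((rightValue g k : A ⊕ ((Z × I) ⊕ B) → Option W) ⁻¹' (some '' O)) := by
  rw [isOpen_sum_iff, isOpen_sum_iff]
  refine ⟨?_, ?_, ?_⟩
  · convert isOpen_empty
    ext a
    simp [rightValue]
  · convert ((k.continuous.comp (g.continuous.comp continuous_fst)).isOpen_preimage O hO).inter
      (isOpen_ne_fun continuous_snd continuous_const : IsOpen {zt : Z × I | zt.2 ≠ 0}) using 1
    ext ⟨z, t⟩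
    by_cases ht : t = 0 <;> simp [rightValue, ht]
  · convert k.continuous.isOpen_preimage O hO using 1
    ext b
    simp [rightValue]

theorem isSome_lift_leftValue (h : C(A, W)) (x : HPO f g) :
    (Quot.lift (leftValue f h) (leftValue_compat f g h) x).isSome ↔ pi f g x ≠ 1 := by
  induction x using ind <;> simp [leftValue]

theorem isSome_lift_rightValue (k : C(B, W)) (x : HPO f g) :
    (Quot.lift (rightValue g k) (rightValue_compat f g k) x).isSome ↔ pi f g x ≠ 0 := by
  induction x using ind <;> simp [rightValue]

def projLeft (h : C(A, W)) : C({x : HPO f g | pi f g x ≠ 1}, W) where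
  toFun x := (Quot.lift (leftValue f h) (leftValue_compat f g h) x.1).get
    ((isSome_lift_leftValue f g h x).2 x.2)
  continuous_toFun :=
    (Quot.continuous_get_lift (r := HPORel f g) _ (leftValue_compat f g h)
      fun _ => isOpen_leftValue_preimage f h).comp
      (continuous_subtype_val.subtype_mk fun x => (isSome_lift_leftValue f g h x.1).2 x.2)

def projRight (k : C(B, W)) : C({x : HPO f g | pi f g x ≠ 0}, W) where
  toFun x := (Quot.lift (rightValue g k) (rightValue_compat f g k) x.1).get
    ((isSome_lift_rightValue f g k x).2 x.2)
  continuous_toFun :=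
    (Quot.continuous_get_lift (r := HPORel f g) _ (rightValue_compat f g k)
      fun _ => isOpen_rightValue_preimage g k).comp
      (continuous_subtype_val.subtype_mk fun x => (isSome_lift_rightValue f g k x.1).2 x.2)

@[simp] theorem projLeft_inl (h : C(A, W)) (a : A) (hx) :
    projLeft f g h ⟨inl f g a, hx⟩ = h a := by
  simp only [projLeft, ContinuousMap.coe_mk]
  exact Option.get_of_eq_some _ (by rw [lift_inl]; rfl)

@[simp] theorem projLeft_cyl (h : C(A, W)) (zt : Z × I) (hx) :
    projLeft f g h ⟨cyl f g zt, hx⟩ = h (f zt.1) := by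
  have ht : zt.2 ≠ 1 := by simpa using hx
  simp only [projLeft, ContinuousMap.coe_mk]
  exact Option.get_of_eq_some _ (by rw [lift_cyl]; simp [leftValue, ht])

@[simp] theorem projRight_cyl (k : C(B, W)) (zt : Z × I) (hx) :
    projRight f g k ⟨cyl f g zt, hx⟩ = k (g zt.1) := by
  have ht : zt.2 ≠ 0 := by simpa using hx
  simp only [projRight, ContinuousMap.coe_mk]
  exact Option.get_of_eq_some _ (by rw [lift_cyl]; simp [rightValue, ht])

@[simp] theorem projRight_inr (k : C(B, W)) (b : B) (hx) :
    projRight f g k ⟨inr f g b, hx⟩ = k b := by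
  simp only [projRight, ContinuousMap.coe_mk]
  exact Option.get_of_eq_some _ (by rw [lift_inr]; rfl)

end HPO

namespace HPB

variable {A B X Y : Type u} [TopologicalSpace A] [TopologicalSpace B] [TopologicalSpace X]
  [TopologicalSpace Y] (f : C(A, X)) (g : C(B, X))

def path : C(HPB f g, C(I, X)) :=
  ⟨fun p => p.1.2.1, continuous_fst.comp (continuous_snd.comp continuous_subtype_val)⟩

@[simp] theorem path_zero (p : HPB f g) : path f g p 0 = f (fst f g p) := p.2.1

@[simp] theorem path_one (p : HPB f g) : path f g p 1 = g (snd f g p) := p.2.2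

def mkMap (a : C(Y, A)) (γ : C(Y, C(I, X))) (b : C(Y, B)) (h₀ : ∀ y, γ y 0 = f (a y))
    (h₁ : ∀ y, γ y 1 = g (b y)) : C(Y, HPB f g) :=
  ⟨fun y => ⟨(a y, γ y, b y), h₀ y, h₁ y⟩,
    (a.continuous.prodMk (γ.continuous.prodMk b.continuous)).subtype_mk _⟩

variable {f g}

theorem ext {p q : HPB f g} (h₁ : fst f g p = fst f g q) (h₂ : path f g p = path f g q)
    (h₃ : snd f g p = snd f g q) : p = q :=
  Subtype.ext (Prod.ext h₁ (Prod.ext h₂ h₃))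

theorem exists_homotopic_snd_eq (p : C(Y, HPB f g)) {q : C(Y, B)}
    (hq : ((snd f g).comp p).Homotopic q) :
    ∃ p' : C(Y, HPB f g), p.Homotopic p' ∧ (snd f g).comp p' = q := by
  obtain ⟨M⟩ := hq
  -- at time `u` the path runs along `path p y` on `[0, 1/(1+u)]`, then along `g ∘ M (·, y)` up to
  -- time `u` of `M`
  let γ : C((I × Y) × I, X) :=
    { toFun := fun q => if (1 + (q.1.1 : ℝ)) * q.2 ≤ 1 then
          path f g (p q.1.2) (projI ((1 + q.1.1) * q.2))
        else g (M (projI ((1 + q.1.1) * q.2 - 1), q.1.2))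
      continuous_toFun := by
        have hs : Continuous fun q : (I × Y) × I => (1 + (q.1.1 : ℝ)) * q.2 := by fun_prop
        refine Continuous.if_le ?_ ?_ hs continuous_const fun q hq => ?_
        · exact ContinuousEval.continuous_eval.comp (((path f g).continuous.comp
            (p.continuous.comp (continuous_snd.comp continuous_fst))).prodMk
              (continuous_projI.comp hs))
        · exact g.continuous.comp (M.continuous.comp ((continuous_projI.comp
            (hs.sub continuous_const)).prodMk (continuous_snd.comp continuous_fst)))
        · simp [hq, projI_of_one_le, projI_of_nonpos] }
  have hγ₀ : ∀ uy : I × Y, γ.curry uy 0 = f (fst f g (p uy.2)) := fun uy => by simp [γ]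
  have hγ₁ : ∀ uy : I × Y, γ.curry uy 1 = g (M uy) := fun uy => by
    obtain ⟨u, y⟩ := uy
    by_cases hu : (1 + (u : ℝ)) ≤ 1
    · obtain rfl : u = 0 := Subtype.ext (le_antisymm (by simpa using hu) u.2.1)
      simp [γ]
    · simp [γ, hu]
  let Φ : C(I × Y, HPB f g) :=
    mkMap f g ((fst f g).comp (p.comp .snd)) γ.curry M hγ₀ hγ₁
  have hΦ₀ : ∀ y, Φ (0, y) = p y := fun y =>
    ext rfl (ContinuousMap.ext fun v => by
      change γ ((0, y), v) = _
      simp [γ, v.2.2]) (M.apply_zero y)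
  exact ⟨Φ.comp ((ContinuousMap.const Y 1).prodMk (.id Y)),
    ⟨{ toContinuousMap := Φ, map_zero_left := hΦ₀, map_one_left := fun _ => rfl }⟩,
    ContinuousMap.ext M.apply_one⟩

end HPB

section Ganea

variable {A X : Type u} [TopologicalSpace A] [TopologicalSpace X] (ιX : C(A, X)) (n : ℕ)

def ganeaInl : C(A, (ganea ιX (n + 1)).G) :=
  HPO.inl (HPB.snd (ganea ιX n).g ιX) (HPB.fst (ganea ιX n).g ιX)

def ganeaCyl : C(HPB (ganea ιX n).g ιX × I, (ganea ιX (n + 1)).G) :=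
  HPO.cyl (HPB.snd (ganea ιX n).g ιX) (HPB.fst (ganea ιX n).g ιX)

def ganeaInr : C((ganea ιX n).G, (ganea ιX (n + 1)).G) :=
  HPO.inr (HPB.snd (ganea ιX n).g ιX) (HPB.fst (ganea ιX n).g ιX)

theorem ganeaInl_eq_cyl (z : HPB (ganea ιX n).g ιX) :
    ganeaInl ιX n (HPB.snd _ _ z) = ganeaCyl ιX n (z, 0) :=
  HPO.inl_eq_cyl _ _ z

theorem ganeaCyl_one (z : HPB (ganea ιX n).g ιX) :
    ganeaCyl ιX n (z, 1) = ganeaInr ιX n (HPB.fst _ _ z) :=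
  HPO.cyl_eq_inr _ _ z

@[simp] theorem ganea_g_inl (a : A) : (ganea ιX (n + 1)).g (ganeaInl ιX n a) = ιX a := rfl

@[simp] theorem ganea_g_cyl (q : HPB (ganea ιX n).g ιX × I) :
    (ganea ιX (n + 1)).g (ganeaCyl ιX n q) = HPB.path _ _ q.1 (σ q.2) := rfl

@[simp] theorem ganea_g_inr (e : (ganea ιX n).G) :
    (ganea ιX (n + 1)).g (ganeaInr ιX n e) = (ganea ιX n).g e := rfl

theorem ganea_g_comp_α : ∀ n, (ganea ιX n).g.comp (ganea ιX n).α = ιX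
  | 0 => rfl
  | _ + 1 => rfl

variable {ιX n}

theorem secatLe.succ (h : secatLe ιX n) : secatLe ιX (n + 1) :=
  let ⟨s, hs⟩ := h
  ⟨(ganeaInr ιX n).comp s, hs⟩

theorem relcatLe.succ (h : relcatLe ιX n) : relcatLe ιX (n + 1) := by
  obtain ⟨s, hs, hsα⟩ := h
  refine ⟨(ganeaInr ιX n).comp s, hs, ?_⟩
  -- `inr ∘ α_n ≃ inl` through the cylinder over the points `(α_n a, constant path, a)`
  let z : C(A, HPB (ganea ιX n).g ιX) := HPB.mkMap _ _ (ganea ιX n).α (ιX.comp .fst).curry (.id A)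
    (fun a => (DFunLike.congr_fun (ganea_g_comp_α ιX n) a).symm) fun _ => rfl
  exact ((Homotopic.refl (ganeaInr ιX n)).comp hsα).trans
    ⟨((HPO.cylHomotopy _ _).compContinuousMap z).symm⟩

theorem secat_le_coe_iff : secat ιX ≤ n ↔ secatLe ιX n := by
  rw [secat, theNat_le_coe_iff]
  exact ⟨fun ⟨m, hmn, hm⟩ => Nat.le_induction hm (fun _ _ => secatLe.succ) n hmn,
    fun h => ⟨n, le_rfl, h⟩⟩

theorem relcat_le_coe_iff : relcat ιX ≤ n ↔ relcatLe ιX n := by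
  rw [relcat, theNat_le_coe_iff]
  exact ⟨fun ⟨m, hmn, hm⟩ => Nat.le_induction hm (fun _ _ => relcatLe.succ) n hmn,
    fun h => ⟨n, le_rfl, h⟩⟩

end Ganea

section Whitehead

variable {A X : Type u} [TopologicalSpace A] [TopologicalSpace X] (ιX : C(A, X)) (n : ℕ)

theorem diagPi_succ (x : X) : diagPi X (n + 1) x = Fin.snoc (diagPi X n x) x := by
  ext i
  induction i using Fin.lastCases <;> simp [diagPi]

theorem init_diagPi (x : X) : Fin.init (diagPi X (n + 1) x) = diagPi X n x := rfl

def whiteheadLegA : C((whitehead ιX n).T × A, (Fin (n + 1) → X) × A) :=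
  ⟨fun p => ((whitehead ιX n).t p.1, p.2),
    ((map_continuous (whitehead ιX n).t).comp continuous_fst).prodMk continuous_snd⟩

def whiteheadLegX : C((whitehead ιX n).T × A, (whitehead ιX n).T × X) :=
  ⟨fun p => (p.1, ιX p.2), continuous_fst.prodMk ((map_continuous ιX).comp continuous_snd)⟩

def whiteheadInl : C((Fin (n + 1) → X) × A, (whitehead ιX (n + 1)).T) :=
  HPO.inl (whiteheadLegA ιX n) (whiteheadLegX ιX n)

def whiteheadCyl : C(((whitehead ιX n).T × A) × I, (whitehead ιX (n + 1)).T) :=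
  HPO.cyl (whiteheadLegA ιX n) (whiteheadLegX ιX n)

def whiteheadInr : C((whitehead ιX n).T × X, (whitehead ιX (n + 1)).T) :=
  HPO.inr (whiteheadLegA ιX n) (whiteheadLegX ιX n)

def whiteheadPi : C((whitehead ιX (n + 1)).T, I) :=
  HPO.pi (whiteheadLegA ιX n) (whiteheadLegX ιX n)

@[simp] theorem whiteheadPi_inl (p : (Fin (n + 1) → X) × A) :
    whiteheadPi ιX n (whiteheadInl ιX n p) = 0 := rfl

@[simp] theorem whiteheadPi_inr (p : (whitehead ιX n).T × X) :
    whiteheadPi ιX n (whiteheadInr ιX n p) = 1 := rfl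

theorem whiteheadInl_eq_cyl (p : (whitehead ιX n).T × A) :
    whiteheadInl ιX n ((whitehead ιX n).t p.1, p.2) = whiteheadCyl ιX n (p, 0) :=
  HPO.inl_eq_cyl _ _ p

theorem whiteheadCyl_one (p : (whitehead ιX n).T × A) :
    whiteheadCyl ιX n (p, 1) = whiteheadInr ιX n (p.1, ιX p.2) :=
  HPO.cyl_eq_inr _ _ p

@[elab_as_elim]
theorem whitehead_succ_ind {motive : (whitehead ιX (n + 1)).T → Prop}
    (inl : ∀ p, motive (whiteheadInl ιX n p)) (cyl : ∀ q, motive (whiteheadCyl ιX n q))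
    (inr : ∀ p, motive (whiteheadInr ιX n p)) (τ : (whitehead ιX (n + 1)).T) : motive τ :=
  HPO.ind inl cyl inr τ

@[simp] theorem whitehead_t_inl (p : (Fin (n + 1) → X) × A) :
    (whitehead ιX (n + 1)).t (whiteheadInl ιX n p) = Fin.snoc p.1 (ιX p.2) := rfl

@[simp] theorem whitehead_t_cyl (q : ((whitehead ιX n).T × A) × I) :
    (whitehead ιX (n + 1)).t (whiteheadCyl ιX n q) =
      Fin.snoc ((whitehead ιX n).t q.1.1) (ιX q.1.2) := rfl

@[simp] theorem whitehead_t_inr (p : (whitehead ιX n).T × X) :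
    (whitehead ιX (n + 1)).t (whiteheadInr ιX n p) = Fin.snoc ((whitehead ιX n).t p.1) p.2 := rfl

theorem whitehead_υ_succ : (whitehead ιX (n + 1)).υ = whiteheadInl ιX n := rfl

def whiteheadCoordA : C({τ | whiteheadPi ιX n τ ≠ 1}, A) :=
  HPO.projLeft (whiteheadLegA ιX n) (whiteheadLegX ιX n) ContinuousMap.snd

def whiteheadCoordT : C({τ | whiteheadPi ιX n τ ≠ 0}, (whitehead ιX n).T) :=
  HPO.projRight (whiteheadLegA ιX n) (whiteheadLegX ιX n) ContinuousMap.fst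

@[simp] theorem whiteheadCoordA_inl (p : (Fin (n + 1) → X) × A) (h) :
    whiteheadCoordA ιX n ⟨whiteheadInl ιX n p, h⟩ = p.2 := HPO.projLeft_inl _ _ _ _ h

@[simp] theorem whiteheadCoordA_cyl (q : ((whitehead ιX n).T × A) × I) (h) :
    whiteheadCoordA ιX n ⟨whiteheadCyl ιX n q, h⟩ = q.1.2 := HPO.projLeft_cyl _ _ _ _ h

@[simp] theorem whiteheadCoordT_cyl (q : ((whitehead ιX n).T × A) × I) (h) :
    whiteheadCoordT ιX n ⟨whiteheadCyl ιX n q, h⟩ = q.1.1 := HPO.projRight_cyl _ _ _ _ h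

@[simp] theorem whiteheadCoordT_inr (p : (whitehead ιX n).T × X) (h) :
    whiteheadCoordT ιX n ⟨whiteheadInr ιX n p, h⟩ = p.1 := HPO.projRight_inr _ _ _ _ h

theorem whitehead_t_last (τ : (whitehead ιX (n + 1)).T) (h : whiteheadPi ιX n τ ≠ 1) :
    (whitehead ιX (n + 1)).t τ (Fin.last (n + 1)) = ιX (whiteheadCoordA ιX n ⟨τ, h⟩) := by
  induction τ using whitehead_succ_ind with
  | inl p => simp
  | cyl q => simp
  | inr p => exact absurd (whiteheadPi_inr ιX n p) h

theorem init_whitehead_t (τ : (whitehead ιX (n + 1)).T) (h : whiteheadPi ιX n τ ≠ 0) :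
    Fin.init ((whitehead ιX (n + 1)).t τ) =
      (whitehead ιX n).t (whiteheadCoordT ιX n ⟨τ, h⟩) := by
  induction τ using whitehead_succ_ind with
  | inl p => exact absurd (whiteheadPi_inl ιX n p) h
  | cyl q => simp
  | inr p => simp

end Whitehead

section Forward

variable {A X : Type u} [TopologicalSpace A] [TopologicalSpace X] (ιX : C(A, X)) (n : ℕ)
  (φ : C((ganea ιX n).G, (whitehead ιX n).T))
  (H : Homotopy ((whitehead ιX n).t.comp φ) ((diagPi X (n + 1)).comp (ganea ιX n).g))

/-- For `z = (e, γ, a)`: a path from `inl (Δ (ι a), a)` to `inr (φ e, g e)` in `T_{n+1}`, running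
backwards through `Δ ∘ γ` and `H`, across the cylinder over `(φ e, a)`, and backwards along `γ`
in the last coordinate. -/
def forwardCylinder : Homotopy
    (((whiteheadInl ιX n).comp (deltaW ιX (n + 1))).comp (HPB.snd (ganea ιX n).g ιX))
    (((whiteheadInr ιX n).comp (φ.prodMk (ganea ιX n).g)).comp
      (HPB.fst (ganea ιX n).g ιX)) where
  toFun q :=
    let e := HPB.fst _ _ q.2
    let γ := HPB.path _ _ q.2
    let a := HPB.snd _ _ q.2
    if (q.1 : ℝ) ≤ 1 / 4 then whiteheadInl ιX n (diagPi X (n + 1) (γ (projI (1 - 4 * q.1))), a)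
    else if (q.1 : ℝ) ≤ 5 / 8 then whiteheadInl ιX n (H (projI ((5 - 8 * q.1) / 3), e), a)
    else if (q.1 : ℝ) ≤ 3 / 4 then whiteheadCyl ιX n ((φ e, a), projI (8 * q.1 - 5))
    else whiteheadInr ιX n (φ e, γ (projI (4 - 4 * q.1)))
  continuous_toFun := by
    apply Continuous.if_le (by fun_prop) _ (by fun_prop) (by fun_prop)
    · intro q hq
      simp only [hq, if_pos (show (1 / 4 : ℝ) ≤ 5 / 8 by norm_num)]
      norm_num [projI_of_one_le]
    apply Continuous.if_le (by fun_prop) _ (by fun_prop) (by fun_prop)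
    · intro q hq
      simp only [hq, if_pos (show (5 / 8 : ℝ) ≤ 3 / 4 by norm_num)]
      norm_num [projI_of_nonpos]
      exact whiteheadInl_eq_cyl ιX n (φ (HPB.fst _ _ q.2), HPB.snd _ _ q.2)
    apply Continuous.if_le (by fun_prop) (by fun_prop) (by fun_prop) (by fun_prop)
    intro q hq
    simp only [hq]
    norm_num [projI_of_one_le]
    exact whiteheadCyl_one ιX n _
  map_zero_left z := by simp [deltaW, diagPi]
  map_one_left z := by norm_num [projI_of_nonpos]

theorem forwardCylinder_apply (t : I) (z : HPB (ganea ιX n).g ιX) :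
    forwardCylinder ιX n φ H (t, z) =
      if (t : ℝ) ≤ 1 / 4 then
        whiteheadInl ιX n (diagPi X (n + 1) (HPB.path _ _ z (projI (1 - 4 * t))), HPB.snd _ _ z)
      else if (t : ℝ) ≤ 5 / 8 then
        whiteheadInl ιX n (H (projI ((5 - 8 * t) / 3), HPB.fst _ _ z), HPB.snd _ _ z)
      else if (t : ℝ) ≤ 3 / 4 then
        whiteheadCyl ιX n ((φ (HPB.fst _ _ z), HPB.snd _ _ z), projI (8 * t - 5))
      else whiteheadInr ιX n (φ (HPB.fst _ _ z), HPB.path _ _ z (projI (4 - 4 * t))) := rfl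

def forwardMap : C((ganea ιX (n + 1)).G, (whitehead ιX (n + 1)).T) :=
  HPO.desc _ _ _ _ (forwardCylinder ιX n φ H)

@[simp] theorem forwardMap_cyl (q : HPB (ganea ιX n).g ιX × I) :
    forwardMap ιX n φ H (ganeaCyl ιX n q) = forwardCylinder ιX n φ H (q.2, q.1) := rfl

@[simp] theorem forwardMap_inr (e : (ganea ιX n).G) :
    forwardMap ιX n φ H (ganeaInr ιX n e) = whiteheadInr ιX n (φ e, (ganea ιX n).g e) := rfl

theorem forwardMap_comp_α :
    (forwardMap ιX n φ H).comp (ganea ιX (n + 1)).α =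
      (whitehead ιX (n + 1)).υ.comp (deltaW ιX (n + 1)) := rfl

def forwardHomotopyInr : Homotopy
    (((whitehead ιX (n + 1)).t.comp (forwardMap ιX n φ H)).comp (ganeaInr ιX n))
    (((diagPi X (n + 2)).comp (ganea ιX (n + 1)).g).comp (ganeaInr ιX n)) where
  toFun p := Fin.snoc (H (projI (2 * p.1 - 1), p.2)) ((ganea ιX n).g p.2)
  continuous_toFun := continuous_snocFun (by fun_prop) (by fun_prop)
  map_zero_left e := by
    norm_num [projI_of_nonpos]
  map_one_left e := by
    norm_num [projI_of_one_le, diagPi_succ (n + 1)]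

theorem forwardHomotopyInr_apply (v : I) (e : (ganea ιX n).G) :
    forwardHomotopyInr ιX n φ H (v, e) =
      Fin.snoc (H (projI (2 * v - 1), e)) ((ganea ιX n).g e) := rfl

/-- Fills the square between `t_{n+1} ∘ forwardMap` and `Δ ∘ g_{n+1}` on the cylinder: at time `v`
the first coordinates run backwards through `Δ ∘ γ` until `(1 + 3v)/4` and then through `H`, while
the last coordinate moves from `γ (min 1 (4 (1 - t)))` to `γ (1 - t)`. -/
def forwardFiller : C((HPB (ganea ιX n).g ιX × I) × I, Fin (n + 2) → X) where
  toFun q :=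
    let γ := HPB.path _ _ q.1.1
    let t : ℝ := q.1.2
    let v : ℝ := q.2
    Fin.snoc
      (if t ≤ (1 + 3 * v) / 4 then diagPi X (n + 1) (γ (projI (1 - 4 * t / (1 + 3 * v))))
        else H (projI (1 - 8 / 3 * (t - (1 + 3 * v) / 4)), HPB.fst _ _ q.1.1))
      (γ (projI ((1 - v) * min 1 (4 * (1 - t)) + v * (1 - t))))
  continuous_toFun := by
    have hden : ∀ q : (HPB (ganea ιX n).g ιX × I) × I, 1 + 3 * (q.2 : ℝ) ≠ 0 := fun q => by
      have := q.2.2.1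
      positivity
    refine continuous_snocFun (Continuous.if_le ?_ (by fun_prop) (by fun_prop) (by fun_prop) ?_)
      (by fun_prop)
    · have hγ : Continuous fun q : (HPB (ganea ιX n).g ιX × I) × I => HPB.path _ _ q.1.1 := by
        fun_prop
      have ht : Continuous fun q : (HPB (ganea ιX n).g ιX × I) × I => 4 * (q.1.2 : ℝ) := by
        fun_prop
      exact (diagPi X (n + 1)).continuous.comp (ContinuousEval.continuous_eval.comp (hγ.prodMk
        (continuous_projI.comp (continuous_const.sub (ht.div (by fun_prop) hden)))))
    · intro q hq
      have h1 : 1 - 4 * (q.1.2 : ℝ) / (1 + 3 * q.2) = 0 := by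
        rw [hq, mul_div_cancel₀ _ (by norm_num), div_self (hden q), sub_self]
      rw [← hq, h1]
      simp

variable {ιX n}

theorem forwardFiller_zero (q : HPB (ganea ιX n).g ιX × I) :
    forwardFiller ιX n φ H (q, 0) =
      (whitehead ιX (n + 1)).t (forwardMap ιX n φ H (ganeaCyl ιX n q)) := by
  obtain ⟨z, t⟩ := q
  have ht₀ : (0 : ℝ) ≤ t := t.2.1
  have ht₁ : (t : ℝ) ≤ 1 := t.2.2
  simp only [forwardFiller, forwardMap_cyl, forwardCylinder_apply, ContinuousMap.coe_mk]
  norm_num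
  have hγ₁ := HPB.path_one _ _ z
  have hH₀ := H.apply_zero (HPB.fst _ _ z)
  split_ifs with h₁ h₂ h₃
  · simp [projI_of_one_le, show 1 ≤ 4 * (1 - (t : ℝ)) by linarith, hγ₁]
  · simp [projI_of_one_le, show 1 ≤ 4 * (1 - (t : ℝ)) by linarith, hγ₁]
    ring_nf
  · rw [projI_of_nonpos (show 1 - 8 / 3 * ((t : ℝ) - 1 / 4) ≤ 0 by linarith), hH₀]
    simp [projI_of_one_le, show 1 ≤ 4 * (1 - (t : ℝ)) by linarith, hγ₁]
  · rw [projI_of_nonpos (show 1 - 8 / 3 * ((t : ℝ) - 1 / 4) ≤ 0 by linarith), hH₀]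
    simp [show 4 * (1 - (t : ℝ)) ≤ 1 by linarith]
    ring_nf

theorem forwardFiller_one (q : HPB (ganea ιX n).g ιX × I) :
    forwardFiller ιX n φ H (q, 1) =
      diagPi X (n + 2) ((ganea ιX (n + 1)).g (ganeaCyl ιX n q)) := by
  obtain ⟨z, t⟩ := q
  have ht₁ : (t : ℝ) ≤ 1 := t.2.2
  have hσ : projI (1 - t) = σ t := by rw [← coe_symm_eq, projI_coe]
  norm_num [forwardFiller, ht₁, hσ, diagPi_succ (n + 1)]

theorem forwardFiller_left (z : HPB (ganea ιX n).g ιX) (v : I) :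
    forwardFiller ιX n φ H ((z, 0), v) =
      Fin.snoc (diagPi X (n + 1) (ιX (HPB.snd _ _ z))) (ιX (HPB.snd _ _ z)) := by
  have hv : (0 : ℝ) ≤ (1 + 3 * v) / 4 := by have := v.2.1; positivity
  norm_num [forwardFiller, hv]

theorem forwardFiller_right (z : HPB (ganea ιX n).g ιX) (v : I) :
    forwardFiller ιX n φ H ((z, 1), v) = forwardHomotopyInr ιX n φ H (v, HPB.fst _ _ z) := by
  have hv₁ : (v : ℝ) ≤ 1 := v.2.2
  have hγ₀ := HPB.path_zero _ _ z
  simp only [forwardFiller, forwardHomotopyInr_apply, ContinuousMap.coe_mk]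
  norm_num [hγ₀]
  split_ifs with hv
  · obtain rfl : v = 1 := Subtype.ext (show (v : ℝ) = 1 by linarith)
    norm_num [projI_of_one_le, H.apply_one, hγ₀, diagPi_succ (n + 1)]
  · ring_nf

variable (ιX n) in
def forwardHomotopy : Homotopy ((whitehead ιX (n + 1)).t.comp (forwardMap ιX n φ H))
    ((diagPi X (n + 2)).comp (ganea ιX (n + 1)).g) :=
  HPO.glueHomotopy _ _
    ((ContinuousMap.Homotopy.refl _).cast rfl
      (ContinuousMap.ext fun a => (diagPi_succ (n + 1) (ιX a)).symm))
    (forwardHomotopyInr ιX n φ H) (forwardFiller ιX n φ H) (forwardFiller_zero φ H)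
    (forwardFiller_one φ H) (forwardFiller_left φ H) (forwardFiller_right φ H)

end Forward

theorem exists_ganea_to_whitehead {A X : Type u} [TopologicalSpace A] [TopologicalSpace X]
    (ιX : C(A, X)) : ∀ n, ∃ φ : C((ganea ιX n).G, (whitehead ιX n).T),
      ((whitehead ιX n).t.comp φ).Homotopic ((diagPi X (n + 1)).comp (ganea ιX n).g) ∧
      φ.comp (ganea ιX n).α = (whitehead ιX n).υ.comp (deltaW ιX n)
  | 0 => ⟨.id A, .refl _, rfl⟩
  | n + 1 =>
    let ⟨φ, ⟨H⟩, _⟩ := exists_ganea_to_whitehead ιX n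
    ⟨forwardMap ιX n φ H, ⟨forwardHomotopy ιX n φ H⟩, forwardMap_comp_α ιX n φ H⟩

section Reverse

variable {A X : Type u} [TopologicalSpace A] [TopologicalSpace X] (ιX : C(A, X)) (n : ℕ)
  (ψ : C(HPB (diagPi X (n + 1)) (whitehead ιX n).t, (ganea ιX n).G))
  (Gh : Homotopy ((ganea ιX n).g.comp ψ) (HPB.fst (diagPi X (n + 1)) (whitehead ιX n).t))

abbrev reverseCoord (p : HPB (diagPi X (n + 2)) (whitehead ιX (n + 1)).t) : ℝ :=
  whiteheadPi ιX n (HPB.snd _ _ p)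

abbrev coordTDomain : Set (HPB (diagPi X (n + 2)) (whitehead ιX (n + 1)).t) :=
  HPB.snd _ _ ⁻¹' {τ | whiteheadPi ιX n τ ≠ 0}

abbrev coordADomain : Set (HPB (diagPi X (n + 2)) (whitehead ιX (n + 1)).t) :=
  HPB.snd _ _ ⁻¹' {τ | whiteheadPi ιX n τ ≠ 1}

def reverseTrunc : C(coordTDomain ιX n, HPB (diagPi X (n + 1)) (whitehead ιX n).t) :=
  HPB.mkMap _ _ ((HPB.fst _ _).restrict _)
    ⟨fun p => (⟨Fin.init, continuous_pi fun _ => continuous_apply _⟩ :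
      C(Fin (n + 2) → X, Fin (n + 1) → X)).comp (HPB.path _ _ p.1),
      (continuous_postcomp _).comp (by fun_prop)⟩
    ((whiteheadCoordT ιX n).comp
      ((HPB.snd _ _).restrictPreimage {τ | whiteheadPi ιX n τ ≠ 0}))
    (fun _ => by simp [init_diagPi])
    (fun p => by simp [init_whitehead_t ιX n _ p.2]; rfl)

@[simp] theorem fst_reverseTrunc (p : coordTDomain ιX n) :
    HPB.fst _ _ (reverseTrunc ιX n p) = HPB.fst _ _ p.1 := rfl

def reverseConn : C(coordTDomain ιX n, C(I, X)) := ContinuousMap.curry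
  { toFun := fun q => if (q.2 : ℝ) ≤ 1 / 2 then Gh (projI (2 * q.2), reverseTrunc ιX n q.1)
      else HPB.path _ _ q.1.1 (projI (2 * q.2 - 1)) (Fin.last (n + 1))
    continuous_toFun := by
      refine Continuous.if_le (by fun_prop) ?_ (by fun_prop) (by fun_prop) fun q hq => ?_
      · exact (continuous_apply _).comp (ContinuousEval.continuous_eval.comp
          ((by fun_prop : Continuous fun q : coordTDomain ιX n × I => HPB.path _ _ q.1.1).prodMk
            (by fun_prop)))
      · norm_num [hq, projI_of_one_le, Gh.apply_one, diagPi] }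

variable {ιX n}

theorem reverseConn_of_le {p : coordTDomain ιX n} {r : ℝ} (h₀ : 0 ≤ r) (h : r ≤ 1 / 2) :
    reverseConn ιX n ψ Gh p (projI r) = Gh (projI (2 * r), reverseTrunc ιX n p) := by
  have hr : (projI r : ℝ) = r := coe_projI h₀ (by linarith)
  simp only [reverseConn, ContinuousMap.curry_apply, ContinuousMap.coe_mk, hr, if_pos h]

theorem reverseConn_of_ge {p : coordTDomain ιX n} {r : ℝ} (h : 1 / 2 ≤ r) (h₁ : r ≤ 1) :
    reverseConn ιX n ψ Gh p (projI r) =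
      HPB.path _ _ p.1 (projI (2 * r - 1)) (Fin.last (n + 1)) := by
  have hr : (projI r : ℝ) = r := coe_projI (by linarith) h₁
  rcases h.lt_or_eq with h | rfl
  · simp only [reverseConn, ContinuousMap.curry_apply, ContinuousMap.coe_mk, hr,
      if_neg (not_le.2 h)]
  · norm_num [reverseConn, hr, projI_of_one_le, Gh.apply_one, diagPi]

theorem reverseConn_zero (p : coordTDomain ιX n) :
    reverseConn ιX n ψ Gh p 0 = (ganea ιX n).g (ψ (reverseTrunc ιX n p)) := by
  rw [← projI_zero, reverseConn_of_le ψ Gh le_rfl (by norm_num)]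
  simp [Gh.apply_zero]

theorem reverseConn_one (p : coordTDomain ιX n) (h : p.1 ∈ coordADomain ιX n) :
    reverseConn ιX n ψ Gh p 1 = ιX (whiteheadCoordA ιX n ⟨HPB.snd _ _ p.1, h⟩) := by
  have := reverseConn_of_ge ψ Gh (p := p) (by norm_num) le_rfl
  norm_num at this
  rw [this, whitehead_t_last ιX n _ h]

variable (ιX n) in
def reverseCylPoint :
    C(↥(coordTDomain ιX n ∩ coordADomain ιX n), HPB (ganea ιX n).g ιX) :=
  HPB.mkMap _ _ ((ψ.comp (reverseTrunc ιX n)).comp (inclusion Set.inter_subset_left))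
    ((reverseConn ιX n ψ Gh).comp (inclusion Set.inter_subset_left))
    ((whiteheadCoordA ιX n).comp
      (((HPB.snd _ _).restrictPreimage {τ | whiteheadPi ιX n τ ≠ 1}).comp
        (inclusion Set.inter_subset_right)))
    (fun _ => reverseConn_zero ψ Gh _) (fun p => reverseConn_one ψ Gh _ p.2.2)

variable (ιX n) in
def reverseMap :
    C(HPB (diagPi X (n + 2)) (whitehead ιX (n + 1)).t, (ganea ιX (n + 1)).G) :=
  pasteThree (μ := reverseCoord ιX n) (by fun_prop) (a := 1 / 3) (b := 2 / 3) (by norm_num)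
    (f₁ := (ganeaInl ιX n).comp ((whiteheadCoordA ιX n).comp
      (((HPB.snd _ _).restrictPreimage {τ | whiteheadPi ιX n τ ≠ 1}).comp
        (inclusion fun _ hp => ne_one_of_coe_le hp (by norm_num)))))
    (f₂ := (ganeaCyl ιX n).comp (((reverseCylPoint ιX n ψ Gh).comp (inclusion fun _ hp =>
      ⟨ne_zero_of_le_coe hp.1 (by norm_num), ne_one_of_coe_le hp.2 (by norm_num)⟩)).prodMk
        ⟨fun p => projI (3 * reverseCoord ιX n p - 1), by fun_prop⟩))
    (f₃ := (ganeaInr ιX n).comp ((ψ.comp (reverseTrunc ιX n)).comp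
      (inclusion fun _ hp => ne_zero_of_le_coe hp (by norm_num))))
    (fun p hp => by
      norm_num [hp]
      rw [← ganeaInl_eq_cyl]
      rfl)
    (fun p hp => by
      norm_num [hp]
      rw [ganeaCyl_one]
      rfl)

theorem reverseMap_of_snd_eq (p : HPB (diagPi X (n + 2)) (whitehead ιX (n + 1)).t) (a : A)
    (h : HPB.snd _ _ p = (whitehead ιX (n + 1)).υ (deltaW ιX (n + 1) a)) :
    reverseMap ιX n ψ Gh p = (ganea ιX (n + 1)).α a := by
  have hμ : reverseCoord ιX n p ≤ 1 / 3 := by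
    simp [reverseCoord, h, whitehead_υ_succ]
  have key : ∀ τ (hτ : whiteheadPi ιX n τ ≠ 1), τ = whiteheadInl ιX n (deltaW ιX (n + 1) a) →
      whiteheadCoordA ιX n ⟨τ, hτ⟩ = a := by
    rintro _ _ rfl
    simp [deltaW]
  rw [reverseMap, pasteThree_of_le _ _ _ _ hμ]
  exact congrArg (ganeaInl ιX n) (key _ _ h)

theorem reverseCoord_cases (p : HPB (diagPi X (n + 2)) (whitehead ιX (n + 1)).t) :
    reverseCoord ιX n p ≤ 1 / 3 ∨ (1 / 3 ≤ reverseCoord ιX n p ∧ reverseCoord ιX n p ≤ 2 / 3) ∨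
      2 / 3 ≤ reverseCoord ιX n p := by
  rcases le_total (reverseCoord ιX n p) (1 / 3) with h | h
  · exact .inl h
  rcases le_total (reverseCoord ιX n p) (2 / 3) with h' | h'
  exacts [.inr (.inl ⟨h, h'⟩), .inr (.inr h')]

variable (ιX n) in
def reverseHomotopy :
    Homotopy ((ganea ιX (n + 1)).g.comp (reverseMap ιX n ψ Gh)) (HPB.fst _ _) where
  toContinuousMap := pasteThree (μ := fun q : I × _ => reverseCoord ιX n q.2) (by fun_prop)
    (a := 1 / 3) (b := 2 / 3) (by norm_num)
    (f₁ := ⟨fun q => HPB.path _ _ q.1.2 (projI (1 - q.1.1)) (Fin.last (n + 1)), by fun_prop⟩)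
    (f₂ := ⟨fun q => reverseConn ιX n ψ Gh ⟨q.1.2, ne_zero_of_le_coe q.2.1 (by norm_num)⟩
      (projI ((1 - q.1.1) * (2 - 3 * reverseCoord ιX n q.1.2) + q.1.1 / 2)), by
        refine ContinuousEval.continuous_eval.comp (Continuous.prodMk ?_ (by fun_prop))
        exact (reverseConn ιX n ψ Gh).continuous.comp (by fun_prop)⟩)
    (f₃ := ⟨fun q => Gh (q.1.1, reverseTrunc ιX n ⟨q.1.2, ne_zero_of_le_coe q.2 (by norm_num)⟩),
      by fun_prop⟩)
    (fun q hq => by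
      have hμ : reverseCoord ιX n q.2 = 1 / 3 := hq
      have hu : (0 : ℝ) ≤ q.1 ∧ (q.1 : ℝ) ≤ 1 := q.1.2
      change HPB.path _ _ q.2 (projI (1 - q.1)) (Fin.last (n + 1)) =
        reverseConn ιX n ψ Gh ⟨q.2, _⟩
          (projI ((1 - q.1) * (2 - 3 * reverseCoord ιX n q.2) + q.1 / 2))
      rw [show (1 - (q.1 : ℝ)) * (2 - 3 * reverseCoord ιX n q.2) + q.1 / 2 = 1 - q.1 / 2 by
        rw [hμ]; ring, reverseConn_of_ge ψ Gh (by linarith) (by linarith)]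
      ring_nf)
    (fun q hq => by
      have hμ : reverseCoord ιX n q.2 = 2 / 3 := hq
      have hu : (0 : ℝ) ≤ q.1 ∧ (q.1 : ℝ) ≤ 1 := q.1.2
      change reverseConn ιX n ψ Gh ⟨q.2, _⟩
        (projI ((1 - q.1) * (2 - 3 * reverseCoord ιX n q.2) + q.1 / 2)) =
          Gh (q.1, reverseTrunc ιX n ⟨q.2, _⟩)
      rw [show (1 - (q.1 : ℝ)) * (2 - 3 * reverseCoord ιX n q.2) + q.1 / 2 = q.1 / 2 by
        rw [hμ]; ring, reverseConn_of_le ψ Gh (by linarith) (by linarith),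
        mul_div_cancel₀ (q.1 : ℝ) two_ne_zero, projI_coe])
  map_zero_left p := by
    rw [ContinuousMap.toFun_eq_coe, ContinuousMap.comp_apply, reverseMap]
    rcases reverseCoord_cases p with h | h | h
    · rw [pasteThree_of_le _ _ _ _ (p := ((0 : I), p)) h,
        pasteThree_of_le _ _ _ _ h]
      change HPB.path _ _ p (projI (1 - (0 : I))) (Fin.last (n + 1)) =
        (ganea ιX (n + 1)).g (ganeaInl ιX n (whiteheadCoordA ιX n ⟨HPB.snd _ _ p, _⟩))
      simpa using whitehead_t_last ιX n _ _
    · rw [pasteThree_of_mem _ _ _ _ (p := ((0 : I), p)) h,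
        pasteThree_of_mem _ _ _ _ h]
      change reverseConn ιX n ψ Gh ⟨p, _⟩
          (projI ((1 - ((0 : I) : ℝ)) * (2 - 3 * reverseCoord ιX n p) + ((0 : I) : ℝ) / 2)) =
        reverseConn ιX n ψ Gh ⟨p, _⟩ (σ (projI (3 * reverseCoord ιX n p - 1)))
      congr 1
      ext
      simp only [Set.Icc.coe_zero, sub_zero, one_mul, zero_div, add_zero, coe_symm_eq]
      rw [coe_projI (by linarith) (by linarith), coe_projI (by linarith) (by linarith)]
      ring
    · rw [pasteThree_of_ge _ _ _ _ (p := ((0 : I), p)) h,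
        pasteThree_of_ge _ _ _ _ h]
      exact Gh.apply_zero _
  map_one_left p := by
    rw [ContinuousMap.toFun_eq_coe]
    rcases reverseCoord_cases p with h | h | h
    · rw [pasteThree_of_le _ _ _ _ (p := ((1 : I), p)) h]
      change HPB.path _ _ p (projI (1 - ((1 : I) : ℝ))) (Fin.last (n + 1)) = HPB.fst _ _ p
      simp only [Set.Icc.coe_one, sub_self, projI_zero, HPB.path_zero]
      rfl
    · rw [pasteThree_of_mem _ _ _ _ (p := ((1 : I), p)) h]
      change reverseConn ιX n ψ Gh ⟨p, _⟩
          (projI ((1 - ((1 : I) : ℝ)) * (2 - 3 * reverseCoord ιX n p) + ((1 : I) : ℝ) / 2)) = _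
      rw [show (1 - ((1 : I) : ℝ)) * (2 - 3 * reverseCoord ιX n p) + ((1 : I) : ℝ) / 2 = 1 / 2 by
        simp, reverseConn_of_le ψ Gh (by norm_num) le_rfl]
      norm_num [Gh.apply_one]
    · rw [pasteThree_of_ge _ _ _ _ (p := ((1 : I), p)) h]
      exact Gh.apply_one _

end Reverse

theorem exists_whiteheadPullback_to_ganea {A X : Type u} [TopologicalSpace A]
    [TopologicalSpace X] (ιX : C(A, X)) :
    ∀ n, ∃ ψ : C(HPB (diagPi X (n + 1)) (whitehead ιX n).t, (ganea ιX n).G),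
      ((ganea ιX n).g.comp ψ).Homotopic (HPB.fst _ _) ∧
      ∀ p a, HPB.snd _ _ p = (whitehead ιX n).υ (deltaW ιX n a) → ψ p = (ganea ιX n).α a
  | 0 => ⟨HPB.snd _ _, (Homotopic.refl (.eval 0)).comp ⟨HPB.pathHomotopy _ _⟩, fun _ _ h => h⟩
  | n + 1 =>
    let ⟨ψ, ⟨Gh⟩, _⟩ := exists_whiteheadPullback_to_ganea ιX n
    ⟨reverseMap ιX n ψ Gh, ⟨reverseHomotopy ιX n ψ Gh⟩, reverseMap_of_snd_eq ψ Gh⟩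

section Comparison

variable {A X : Type u} [TopologicalSpace A] [TopologicalSpace X] (ιX : C(A, X)) (n : ℕ)

theorem secatLe_iff_exists_whitehead : secatLe ιX n ↔ ∃ ρ : C(X, (whitehead ιX n).T),
    ((whitehead ιX n).t.comp ρ).Homotopic (diagPi X (n + 1)) := by
  constructor
  · rintro ⟨s, hs⟩
    obtain ⟨φ, hφ, -⟩ := exists_ganea_to_whitehead ιX n
    exact ⟨φ.comp s, (hφ.comp (.refl s)).trans ((Homotopic.refl (diagPi X (n + 1))).comp hs)⟩
  · rintro ⟨ρ, ⟨K⟩⟩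
    obtain ⟨ψ, hψ, -⟩ := exists_whiteheadPullback_to_ganea ιX n
    exact ⟨ψ.comp (HPB.lift (diagPi X (n + 1)) (whitehead ιX n).t (.id X) ρ K.symm),
      hψ.comp (.refl _)⟩

theorem relcatLe_iff_exists_whitehead : relcatLe ιX n ↔ ∃ ρ : C(X, (whitehead ιX n).T),
    ((whitehead ιX n).t.comp ρ).Homotopic (diagPi X (n + 1)) ∧
    (ρ.comp ιX).Homotopic ((whitehead ιX n).υ.comp (deltaW ιX n)) := by
  constructor
  · rintro ⟨s, hs, hsα⟩
    obtain ⟨φ, hφ, hφα⟩ := exists_ganea_to_whitehead ιX n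
    refine ⟨φ.comp s, (hφ.comp (.refl s)).trans ((Homotopic.refl (diagPi X (n + 1))).comp hs),
      ?_⟩
    rw [← hφα]
    exact (Homotopic.refl φ).comp hsα
  · rintro ⟨ρ, ⟨K⟩, hρ⟩
    obtain ⟨ψ, hψ, hψα⟩ := exists_whiteheadPullback_to_ganea ιX n
    let l := HPB.lift (diagPi X (n + 1)) (whitehead ιX n).t (.id X) ρ K.symm
    obtain ⟨p, hlp, hp⟩ := HPB.exists_homotopic_snd_eq (l.comp ιX) hρ
    refine ⟨ψ.comp l, hψ.comp (.refl _), ((Homotopic.refl ψ).comp hlp).trans ?_⟩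
    rw [show ψ.comp p = (ganea ιX n).α from
      ContinuousMap.ext fun a => hψα _ a (DFunLike.congr_fun hp a)]

end Comparison

end

/-- Whitehead-style characterization of sectional and relative category. -/
theorem secat_relcat_iff_whitehead {A X : Type u} [TopologicalSpace A] [TopologicalSpace X]
    (ιX : C(A, X)) (n : ℕ) :
    (secat ιX ≤ (n : ℕ∞) ↔ ∃ ρ : C(X, (whitehead ιX n).T),
      ((whitehead ιX n).t.comp ρ).Homotopic (diagPi X (n + 1))) ∧
    (relcat ιX ≤ (n : ℕ∞) ↔ ∃ ρ : C(X, (whitehead ιX n).T),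
      ((whitehead ιX n).t.comp ρ).Homotopic (diagPi X (n + 1)) ∧
      (ρ.comp ιX).Homotopic ((whitehead ιX n).υ.comp (deltaW ιX n))) :=
  ⟨secat_le_coe_iff.trans (secatLe_iff_exists_whitehead ιX n),
    relcat_le_coe_iff.trans (relcatLe_iff_exists_whitehead ιX n)⟩
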